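/- (Uniform monotonicity, inequalities (3.8)–(3.9)) Let p≥2. There exists a constant c_p>0, depending only on p, such that for every finite graph G=(V,E), every integer m≥1, every h:V→(0,∞), and all functions u1,u2:V→ℝ, one has B_{m,p}(u1,u1−u2) − B_{m,p}(u2,u1−u2) + ∫_V h·(|u1|^{p−2}u1 − |u2|^{p−2}u2)·(u1−u2) dμ ≥ c_p·‖u1−u2‖_{W^{m,p}}^p. -/

import Mathlib

open Real

noncomputable section

variable {V : Type*}

/-- Integral on a finite graph: `∫_V u dμ = ∑_{x∈V} μ(x) u(x)`. -/
def intV [Fintype V] (μ u : V → ℝ) : ℝ := ∑ x, μ x * u x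

/-- Graph Laplacian. -/
def glap [Fintype V] (w : V → V → ℝ) (μ : V → ℝ) (u : V → ℝ) (x : V) : ℝ :=
  (1 / μ x) * ∑ y, w x y * (u y - u x)

/-- The bilinear form Γ. -/
def ggam [Fintype V] (w : V → V → ℝ) (μ : V → ℝ) (u v : V → ℝ) (x : V) : ℝ :=
  (1 / (2 * μ x)) * ∑ y, w x y * (u y - u x) * (v y - v x)

/-- Length of the gradient: `|∇u|(x) = √(Γ(u,u)(x))`. -/
def gnorm [Fintype V] (w : V → V → ℝ) (μ : V → ℝ) (u : V → ℝ) (x : V) : ℝ :=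
  Real.sqrt (ggam w μ u u x)

/-- The length `|∇^m u|` of the m-th order gradient. -/
def gradm [Fintype V] (w : V → V → ℝ) (μ : V → ℝ) (m : ℕ) (u : V → ℝ) (x : V) : ℝ :=
  if m % 2 = 1 then gnorm w μ ((glap w μ)^[(m - 1) / 2] u) x
  else |((glap w μ)^[m / 2] u) x|

/-- The Sobolev norm `‖u‖_{W^{m,l}}` (with weight `h`). -/
def wnorm [Fintype V] (w : V → V → ℝ) (μ h : V → ℝ) (m : ℕ) (l : ℝ) (u : V → ℝ) : ℝ :=
  (intV μ (fun x => gradm w μ m u x ^ l + h x * |u x| ^ l)) ^ (1 / l)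

/-- min of a function over the (nonempty finite) vertex set. -/
def fmin [Fintype V] [Nonempty V] (f : V → ℝ) : ℝ :=
  Finset.univ.inf' Finset.univ_nonempty f

/-- max of a function over the (nonempty finite) vertex set. -/
def fmax [Fintype V] [Nonempty V] (f : V → ℝ) : ℝ :=
  Finset.univ.sup' Finset.univ_nonempty f

/-- The poly-Laplacian pairing `B_{m,p}(u,φ)`. -/
def Bmp [Fintype V] (w : V → V → ℝ) (μ : V → ℝ) (m : ℕ) (p : ℝ) (u φ : V → ℝ) : ℝ :=
  if m % 2 = 1 then
    intV μ (fun x => gradm w μ m u x ^ (p - 2) *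
      ggam w μ ((glap w μ)^[(m - 1) / 2] u) ((glap w μ)^[(m - 1) / 2] φ) x)
  else
    intV μ (fun x => gradm w μ m u x ^ (p - 2) *
      ((glap w μ)^[m / 2] u x) * ((glap w μ)^[m / 2] φ x))

end

/-!
At every vertex both `B_{m,p}` and the zeroth-order term have the shape
`‖a‖^{p-2}⟪a, a - b⟫ - ‖b‖^{p-2}⟪b, a - b⟫` for vectors `a, b` of an inner product space:
`a = u₁(x) ∈ ℝ` for the zeroth-order term, `a = Δ^{m/2}u₁(x) ∈ ℝ` for even `m`, and for odd `m` the vector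
`(√(w_{xy}/(2μ(x))) (f(y) - f(x)))_y` with `f = Δ^{(m-1)/2}u₁`, whose inner products are `Γ`.
So the theorem follows vertex by vertex from Simon's inequality with `c_p = 2^{1-p}`. With
`s = ‖a‖`, `t = ‖b‖`, `r = ‖a - b‖` and `q = p - 2`, twice that expression equals
`(s^q - t^q)(s² - t²) + (s^q + t^q) r²`; the first term is nonnegative, and
`r ≤ 2 max(s, t)` gives `r^q ≤ 2^q (s^q + t^q)`, hence the second is at least `2^{2-p} r^p`.
-/

section Simon

lemma rpow_eq_rpow_sub_two_mul_sq {p x : ℝ} (hp : 2 ≤ p) (hx : 0 ≤ x) :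
    x ^ p = x ^ (p - 2) * x ^ 2 := by
  rw [← rpow_two, ← rpow_add' hx (by linarith), sub_add_cancel]

lemma rpow_le_two_rpow_mul_add {q r s t : ℝ} (hq : 0 ≤ q) (hr : 0 ≤ r) (hs : 0 ≤ s)
    (ht : 0 ≤ t) (hrst : r ≤ s + t) : r ^ q ≤ 2 ^ q * (s ^ q + t ^ q) := by
  have hsq := rpow_nonneg hs q
  have htq := rpow_nonneg ht q
  rcases le_total s t with hst | hts
  · calc r ^ q ≤ (2 * t) ^ q := rpow_le_rpow hr (by linarith) hq
      _ = 2 ^ q * t ^ q := mul_rpow zero_le_two ht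
      _ ≤ 2 ^ q * (s ^ q + t ^ q) := by gcongr; linarith
  · calc r ^ q ≤ (2 * s) ^ q := rpow_le_rpow hr (by linarith) hq
      _ = 2 ^ q * s ^ q := mul_rpow zero_le_two hs
      _ ≤ 2 ^ q * (s ^ q + t ^ q) := by gcongr; linarith

lemma rpow_sub_rpow_mul_sq_sub_sq_nonneg {q s t : ℝ} (hq : 0 ≤ q) (hs : 0 ≤ s) (ht : 0 ≤ t) :
    0 ≤ (s ^ q - t ^ q) * (s ^ 2 - t ^ 2) := by
  rcases le_total s t with hst | hts
  · exact mul_nonneg_of_nonpos_of_nonpos (sub_nonpos.2 (rpow_le_rpow hs hst hq))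
      (sub_nonpos.2 (pow_le_pow_left₀ hs hst 2))
  · exact mul_nonneg (sub_nonneg.2 (rpow_le_rpow ht hts hq))
      (sub_nonneg.2 (pow_le_pow_left₀ ht hts 2))

theorem two_rpow_mul_norm_sub_rpow_le {E : Type*} [NormedAddCommGroup E]
    [InnerProductSpace ℝ E] {p : ℝ} (hp : 2 ≤ p) (a b : E) :
    2 ^ (1 - p) * ‖a - b‖ ^ p ≤
      ‖a‖ ^ (p - 2) * inner ℝ a (a - b) - ‖b‖ ^ (p - 2) * inner ℝ b (a - b) := by
  set s := ‖a‖
  set t := ‖b‖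
  set r := ‖a - b‖
  have hq : 0 ≤ p - 2 := by linarith
  have hr2 : r ^ 2 = s ^ 2 + t ^ 2 - 2 * inner ℝ a b := by
    rw [norm_sub_sq_real]; ring
  have hidentity : 2 * (s ^ (p - 2) * inner ℝ a (a - b) - t ^ (p - 2) * inner ℝ b (a - b)) =
      (s ^ (p - 2) - t ^ (p - 2)) * (s ^ 2 - t ^ 2) + (s ^ (p - 2) + t ^ (p - 2)) * r ^ 2 := by
    rw [hr2, inner_sub_right, inner_sub_right, real_inner_self_eq_norm_sq,
      real_inner_self_eq_norm_sq, real_inner_comm b a]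
    ring
  have hmono := rpow_sub_rpow_mul_sq_sub_sq_nonneg hq (norm_nonneg a) (norm_nonneg b)
  have hpow : r ^ (p - 2) ≤ 2 ^ (p - 2) * (s ^ (p - 2) + t ^ (p - 2)) :=
    rpow_le_two_rpow_mul_add hq (norm_nonneg _) (norm_nonneg _) (norm_nonneg _)
      (norm_sub_le a b)
  have htwo : (2 : ℝ) ^ (1 - p) * 2 ^ (p - 2) = 1 / 2 := by
    rw [← rpow_add two_pos, show 1 - p + (p - 2) = -1 by ring, rpow_neg_one, one_div]
  have hmain : 2 ^ (1 - p) * r ^ p ≤ (s ^ (p - 2) + t ^ (p - 2)) * r ^ 2 / 2 :=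
    calc 2 ^ (1 - p) * r ^ p = 2 ^ (1 - p) * r ^ (p - 2) * r ^ 2 := by
          rw [rpow_eq_rpow_sub_two_mul_sq hp (norm_nonneg _), mul_assoc]
      _ ≤ 2 ^ (1 - p) * (2 ^ (p - 2) * (s ^ (p - 2) + t ^ (p - 2))) * r ^ 2 := by gcongr
      _ = (s ^ (p - 2) + t ^ (p - 2)) * r ^ 2 / 2 := by rw [← mul_assoc, htwo]; ring
  linarith

theorem two_rpow_mul_abs_sub_rpow_le {p : ℝ} (hp : 2 ≤ p) (a b : ℝ) :
    2 ^ (1 - p) * |a - b| ^ p ≤ (|a| ^ (p - 2) * a - |b| ^ (p - 2) * b) * (a - b) := by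
  have h := two_rpow_mul_norm_sub_rpow_le hp a b
  simp only [Real.norm_eq_abs, RCLike.inner_apply, conj_trivial] at h
  linarith

end Simon

section Graph

variable {V : Type*}

noncomputable def gradVec (w : V → V → ℝ) (μ : V → ℝ) (x : V) (f : V → ℝ) : EuclideanSpace ℝ V :=
  WithLp.toLp 2 fun y => √(w x y / (2 * μ x)) * (f y - f x)

lemma gradVec_sub (w : V → V → ℝ) (μ : V → ℝ) (x : V) (f g : V → ℝ) :
    gradVec w μ x (f - g) = gradVec w μ x f - gradVec w μ x g := by
  ext y
  simp only [gradVec, Pi.sub_apply, PiLp.sub_apply]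
  ring

variable [Fintype V]

lemma intV_add (μ f g : V → ℝ) : intV μ (f + g) = intV μ f + intV μ g := by
  simp only [intV, Pi.add_apply, mul_add, Finset.sum_add_distrib]

lemma intV_sub (μ f g : V → ℝ) : intV μ (f - g) = intV μ f - intV μ g := by
  simp only [intV, Pi.sub_apply, mul_sub, Finset.sum_sub_distrib]

lemma mul_intV (μ f : V → ℝ) (c : ℝ) : c * intV μ f = intV μ (fun x => c * f x) := by
  simp only [intV, Finset.mul_sum]
  exact Finset.sum_congr rfl fun x _ => mul_left_comm _ _ _

lemma intV_nonneg {μ f : V → ℝ} (hμ : ∀ x, 0 ≤ μ x) (hf : ∀ x, 0 ≤ f x) : 0 ≤ intV μ f :=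
  Finset.sum_nonneg fun x _ => mul_nonneg (hμ x) (hf x)

lemma intV_mono {μ f g : V → ℝ} (hμ : ∀ x, 0 ≤ μ x) (hfg : ∀ x, f x ≤ g x) :
    intV μ f ≤ intV μ g :=
  Finset.sum_le_sum fun x _ => mul_le_mul_of_nonneg_left (hfg x) (hμ x)

lemma glap_sub (w : V → V → ℝ) (μ u v : V → ℝ) :
    glap w μ (u - v) = glap w μ u - glap w μ v := by
  funext x
  simp only [glap, Pi.sub_apply, ← mul_sub, ← Finset.sum_sub_distrib]
  congr 1
  exact Finset.sum_congr rfl fun y _ => by ring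

lemma iterate_glap_sub (w : V → V → ℝ) (μ : V → ℝ) (k : ℕ) (u v : V → ℝ) :
    (glap w μ)^[k] (u - v) = (glap w μ)^[k] u - (glap w μ)^[k] v := by
  induction k with
  | zero => rfl
  | succ k ih => simp only [Function.iterate_succ_apply', ih, glap_sub]

lemma ggam_eq_inner_gradVec {w : V → V → ℝ} {μ : V → ℝ} (hw : ∀ x y, 0 ≤ w x y)
    (hμ : ∀ x, 0 < μ x) (f g : V → ℝ) (x : V) :
    ggam w μ f g x = inner ℝ (gradVec w μ x f) (gradVec w μ x g) := by
  have hμx := hμ x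
  simp only [ggam, gradVec, PiLp.inner_apply, RCLike.inner_apply, conj_trivial, Finset.mul_sum]
  refine Finset.sum_congr rfl fun y _ => ?_
  have hsq : √(w x y / (2 * μ x)) * √(w x y / (2 * μ x)) = w x y / (2 * μ x) :=
    mul_self_sqrt (by have := hw x y; positivity)
  linear_combination (f y - f x) * (g y - g x) * hsq.symm

lemma gnorm_eq_norm_gradVec {w : V → V → ℝ} {μ : V → ℝ} (hw : ∀ x y, 0 ≤ w x y)
    (hμ : ∀ x, 0 < μ x) (f : V → ℝ) (x : V) :
    gnorm w μ f x = ‖gradVec w μ x f‖ := by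
  rw [gnorm, ggam_eq_inner_gradVec hw hμ, real_inner_self_eq_norm_sq, sqrt_sq (norm_nonneg _)]

lemma gradm_nonneg (w : V → V → ℝ) (μ : V → ℝ) (m : ℕ) (u : V → ℝ) (x : V) :
    0 ≤ gradm w μ m u x := by
  unfold gradm
  split
  · exact sqrt_nonneg _
  · exact abs_nonneg _

lemma wnorm_rpow {w : V → V → ℝ} {μ h : V → ℝ} (hμ : ∀ x, 0 ≤ μ x) (hh : ∀ x, 0 ≤ h x)
    (m : ℕ) {l : ℝ} (hl : l ≠ 0) (u : V → ℝ) :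
    wnorm w μ h m l u ^ l = intV μ (fun x => gradm w μ m u x ^ l + h x * |u x| ^ l) := by
  rw [wnorm, one_div]
  refine rpow_inv_rpow (intV_nonneg hμ fun x => ?_) hl
  have := rpow_nonneg (gradm_nonneg w μ m u x) l
  have := rpow_nonneg (abs_nonneg (u x)) l
  have := hh x
  positivity

noncomputable def gradmInner (w : V → V → ℝ) (μ : V → ℝ) (m : ℕ) (u φ : V → ℝ) (x : V) : ℝ :=
  if m % 2 = 1 then ggam w μ ((glap w μ)^[(m - 1) / 2] u) ((glap w μ)^[(m - 1) / 2] φ) x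
  else (glap w μ)^[m / 2] u x * (glap w μ)^[m / 2] φ x

lemma Bmp_eq_intV (w : V → V → ℝ) (μ : V → ℝ) (m : ℕ) (p : ℝ) (u φ : V → ℝ) :
    Bmp w μ m p u φ = intV μ (fun x => gradm w μ m u x ^ (p - 2) * gradmInner w μ m u φ x) := by
  unfold Bmp gradmInner
  split_ifs
  · rfl
  · simp only [mul_assoc]

theorem two_rpow_mul_gradm_sub_rpow_le {w : V → V → ℝ} {μ : V → ℝ} (hw : ∀ x y, 0 ≤ w x y)
    (hμ : ∀ x, 0 < μ x) (m : ℕ) {p : ℝ} (hp : 2 ≤ p) (u₁ u₂ : V → ℝ) (x : V) :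
    2 ^ (1 - p) * gradm w μ m (u₁ - u₂) x ^ p ≤
      gradm w μ m u₁ x ^ (p - 2) * gradmInner w μ m u₁ (u₁ - u₂) x -
        gradm w μ m u₂ x ^ (p - 2) * gradmInner w μ m u₂ (u₁ - u₂) x := by
  unfold gradm gradmInner
  split_ifs
  · simp only [iterate_glap_sub, gnorm_eq_norm_gradVec hw hμ, ggam_eq_inner_gradVec hw hμ,
      gradVec_sub]
    exact two_rpow_mul_norm_sub_rpow_le hp _ _
  · rw [iterate_glap_sub, Pi.sub_apply]
    exact (two_rpow_mul_abs_sub_rpow_le hp _ _).trans_eq (by ring)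

end Graph

/-- Uniform monotonicity (inequalities (3.8)–(3.9)): for `p ≥ 2` there is `c_p > 0`,
depending only on `p`, such that for every finite graph, every `m ≥ 1`, every weight
`h : V → (0,∞)` and all `u1, u2 : V → ℝ`,
`B_{m,p}(u1,u1−u2) − B_{m,p}(u2,u1−u2) + ∫_V h·(|u1|^{p−2}u1 − |u2|^{p−2}u2)·(u1−u2) dμ
  ≥ c_p·‖u1−u2‖_{W^{m,p}}^p`. -/
theorem stmt9 (p : ℝ) (hp : 2 ≤ p) :
    ∃ c : ℝ, 0 < c ∧
      ∀ (V : Type) [Fintype V] [Nonempty V] (w : V → V → ℝ) (μ : V → ℝ),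
        (∀ x y, w x y = w y x) → (∀ x y, 0 ≤ w x y) → (∀ x, w x x = 0) →
        (∀ x, 0 < μ x) →
        ∀ (m : ℕ), 1 ≤ m → ∀ (h : V → ℝ), (∀ x, 0 < h x) →
        ∀ u1 u2 : V → ℝ,
          c * wnorm w μ h m p (u1 - u2) ^ p ≤
            Bmp w μ m p u1 (u1 - u2) - Bmp w μ m p u2 (u1 - u2) +
              intV μ (fun x =>
                h x * (|u1 x| ^ (p - 2) * u1 x - |u2 x| ^ (p - 2) * u2 x) *
                  (u1 x - u2 x)) := by
  refine ⟨2 ^ (1 - p), by positivity, ?_⟩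
  intro V _ _ w μ _ hw _ hμ m _ h hh u1 u2
  rw [wnorm_rpow (fun x => (hμ x).le) (fun x => (hh x).le) m (by positivity), mul_intV,
    Bmp_eq_intV, Bmp_eq_intV, ← intV_sub, ← intV_add]
  refine intV_mono (fun x => (hμ x).le) fun x => ?_
  have hgrad := two_rpow_mul_gradm_sub_rpow_le hw hμ m hp u1 u2 x
  have hzero := mul_le_mul_of_nonneg_left (two_rpow_mul_abs_sub_rpow_le hp (u1 x) (u2 x))
    (hh x).le
  simp only [Pi.add_apply, Pi.sub_apply] at hgrad ⊢
  linarith
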